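/- arXiv:2301.08960 — 2 statements merged into one kernel-verified Lean document; each statement's English description precedes it below -/
import Mathlib

section
/- Let p be a prime with p ≡ 1 (mod 6) and write p₁ = (p-1)/6. Then every integer n with 6n+1 ≢ 0 (mod p) can be written uniquely in exactly one of the two forms: (i) n = p(2pm + ℓ₁) + a + p₁ with 1 ≤ a ≤ (p-1)/2, 0 ≤ ℓ₁ < 2p, m ∈ ℤ; or (ii) n = p(-2pm - ℓ₁) - a + p₁ with 1 ≤ a ≤ (p-1)/2, 1 ≤ ℓ₁ ≤ 2p, m ∈ ℤ. -/
/-!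
Put `r = n - p₁`; since `6 p₁ = p - 1`, the hypothesis says exactly that `p ∤ r`. Form (i) says
`r = p k + a` and form (ii) says `-r - p = p k' + a`, with `k = 2 p m + ℓ₁` and
`k' = 2 p m + (ℓ₁ - 1)` ranging bijectively over `ℤ`. So each form is Euclidean division by `p`
followed by division by `2 p`, and it applies exactly when the residue (of `r`, resp. of `-r`)
lies in `[1, (p - 1) / 2]`. As `p` is odd and `p ∤ r`, the residues of `r` and `-r` add up to `p`,
so exactly one of them lies in that lower half.
-/

def InLowerHalf (P r : ℤ) : Prop := 1 ≤ r % P ∧ r % P ≤ (P - 1) / 2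

theorem inLowerHalf_neg_sub_self_iff {P r : ℤ} (hP : 0 < P) (hodd : P % 2 = 1) (hr : ¬ P ∣ r) :
    InLowerHalf P (-r - P) ↔ ¬ InLowerHalf P r := by
  have hne : r % P ≠ 0 := fun h => hr (Int.dvd_of_emod_eq_zero h)
  have hlt := Int.emod_lt_of_pos r hP
  unfold InLowerHalf
  rw [Int.sub_emod_right, Int.neg_emod, if_neg hr, Int.natAbs_of_nonneg hP.le]
  omega

theorem eq_mul_add_iff_inLowerHalf {P r a k : ℤ} (hP : 0 < P) :
    (1 ≤ a ∧ a ≤ (P - 1) / 2 ∧ r = P * k + a) ↔ InLowerHalf P r ∧ a = r % P ∧ k = r / P := by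
  constructor
  · rintro ⟨ha₁, ha₂, rfl⟩
    obtain ⟨hk, ha⟩ := (Int.ediv_emod_unique (q := k) (r := a) hP).2
      ⟨add_comm _ _, by omega, by omega⟩
    rw [InLowerHalf, hk, ha]
    exact ⟨⟨ha₁, ha₂⟩, rfl, rfl⟩
  · rintro ⟨⟨ha₁, ha₂⟩, rfl, rfl⟩
    exact ⟨ha₁, ha₂, (Int.mul_ediv_add_emod r P).symm⟩

theorem formOne_iff {P r : ℤ} (hP : 0 < P) (x : ℤ × ℤ × ℤ) :
    (1 ≤ x.1 ∧ x.1 ≤ (P - 1) / 2 ∧ 0 ≤ x.2.1 ∧ x.2.1 < 2 * P ∧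
        r = P * (2 * P * x.2.2 + x.2.1) + x.1) ↔
      InLowerHalf P r ∧ x = (r % P, r / P % (2 * P), r / P / (2 * P)) := by
  obtain ⟨a, ℓ, m⟩ := x
  have hdigit := eq_mul_add_iff_inLowerHalf (r := r) (a := a) (k := 2 * P * m + ℓ) hP
  have hblock := Int.ediv_emod_unique (a := r / P) (r := ℓ) (q := m) (by omega : 0 < 2 * P)
  simp only [Prod.mk.injEq]
  constructor
  · rintro ⟨ha₁, ha₂, hℓ₁, hℓ₂, hr⟩
    obtain ⟨hlow, ha, hk⟩ := hdigit.1 ⟨ha₁, ha₂, hr⟩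
    obtain ⟨hm, hℓ⟩ := hblock.2 ⟨by linarith, hℓ₁, hℓ₂⟩
    exact ⟨hlow, ha, hℓ.symm, hm.symm⟩
  · rintro ⟨hlow, ha, hℓ, hm⟩
    obtain ⟨hk, hℓ₁, hℓ₂⟩ := hblock.1 ⟨hm.symm, hℓ.symm⟩
    obtain ⟨ha₁, ha₂, hr⟩ := hdigit.2 ⟨hlow, ha, by linarith⟩
    exact ⟨ha₁, ha₂, hℓ₁, hℓ₂, hr⟩

theorem formTwo_iff {P r : ℤ} (hP : 0 < P) (x : ℤ × ℤ × ℤ) :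
    (1 ≤ x.1 ∧ x.1 ≤ (P - 1) / 2 ∧ 1 ≤ x.2.1 ∧ x.2.1 ≤ 2 * P ∧
        r = P * (-(2 * P * x.2.2) - x.2.1) - x.1) ↔
      InLowerHalf P (-r - P) ∧
        x = ((-r - P) % P, (-r - P) / P % (2 * P) + 1, (-r - P) / P / (2 * P)) := by
  obtain ⟨a, ℓ, m⟩ := x
  have hshift : (1 ≤ a ∧ a ≤ (P - 1) / 2 ∧ 1 ≤ ℓ ∧ ℓ ≤ 2 * P ∧
        r = P * (-(2 * P * m) - ℓ) - a) ↔
      (1 ≤ a ∧ a ≤ (P - 1) / 2 ∧ 0 ≤ ℓ - 1 ∧ ℓ - 1 < 2 * P ∧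
        -r - P = P * (2 * P * m + (ℓ - 1)) + a) := by
    constructor <;> rintro ⟨ha₁, ha₂, hℓ₁, hℓ₂, hr⟩
    · exact ⟨ha₁, ha₂, by omega, by omega, by linear_combination -hr⟩
    · exact ⟨ha₁, ha₂, by omega, by omega, by linear_combination -hr⟩
  refine hshift.trans ((formOne_iff hP (a, ℓ - 1, m)).trans ?_)
  simp only [Prod.mk.injEq, sub_eq_iff_eq_add]

theorem existsUnique_sum_elim_of_iff {α β : Type*} {A : α → Prop} {B : β → Prop} {c : Prop}
    {u : α} {v : β} (hA : ∀ x, A x ↔ c ∧ x = u) (hB : ∀ y, B y ↔ ¬c ∧ y = v) :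
    ∃! t, Sum.elim A B t := by
  by_cases hc : c
  · refine ⟨.inl u, (hA u).2 ⟨hc, rfl⟩, ?_⟩
    rintro (x | y) h
    · rw [((hA x).1 h).2]
    · exact absurd hc ((hB y).1 h).1
  · refine ⟨.inr v, (hB v).2 ⟨hc, rfl⟩, ?_⟩
    rintro (x | y) h
    · exact absurd ((hA x).1 h).1 hc
    · rw [((hB y).1 h).2]

theorem unique_param_mod6_one_general (p : ℕ) (h6 : (p : ℤ) % 6 = 1)
    (p₁ : ℤ) (hp₁ : p₁ = ((p : ℤ) - 1) / 6)
    (n : ℤ) (hn : ¬ ((p : ℤ) ∣ (6 * n + 1))) :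
    ∃! t : (ℤ × ℤ × ℤ) ⊕ (ℤ × ℤ × ℤ),
      Sum.elim
        (fun x : ℤ × ℤ × ℤ =>
          1 ≤ x.1 ∧ x.1 ≤ ((p : ℤ) - 1) / 2 ∧ 0 ≤ x.2.1 ∧ x.2.1 < 2 * (p : ℤ) ∧
            n = (p : ℤ) * (2 * (p : ℤ) * x.2.2 + x.2.1) + x.1 + p₁)
        (fun x : ℤ × ℤ × ℤ =>
          1 ≤ x.1 ∧ x.1 ≤ ((p : ℤ) - 1) / 2 ∧ 1 ≤ x.2.1 ∧ x.2.1 ≤ 2 * (p : ℤ) ∧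
            n = (p : ℤ) * (-(2 * (p : ℤ) * x.2.2) - x.2.1) - x.1 + p₁) t := by
  have hP : (0 : ℤ) < p := by omega
  have h6p₁ : 6 * p₁ = p - 1 := by omega
  have hr : ¬ (p : ℤ) ∣ n - p₁ := fun ⟨k, hk⟩ =>
    hn ⟨6 * k + 1, by linear_combination 6 * hk + h6p₁⟩
  exact existsUnique_sum_elim_of_iff
    (fun x => by rw [← sub_eq_iff_eq_add, formOne_iff hP])
    (fun x => by
      rw [← sub_eq_iff_eq_add, formTwo_iff hP, inLowerHalf_neg_sub_self_iff hP (by omega) hr])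

/-- CASE `p ≡ 1 (mod 6)`: every integer `n` with `6n+1 ≢ 0 (mod p)` can be
written uniquely in exactly one of the two forms
(i)  `n = p(2pm + ℓ₁) + a + p₁` with `1 ≤ a ≤ (p-1)/2`, `0 ≤ ℓ₁ < 2p`, `m ∈ ℤ`,
(ii) `n = p(-2pm - ℓ₁) - a + p₁` with `1 ≤ a ≤ (p-1)/2`, `1 ≤ ℓ₁ ≤ 2p`, `m ∈ ℤ`,
where `p₁ = (p-1)/6`.  A triple `(a, ℓ₁, m)` together with the choice of form is
recorded as an element of `(ℤ × ℤ × ℤ) ⊕ (ℤ × ℤ × ℤ)`. -/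
theorem unique_param_mod6_one (p : ℕ) (hp : p.Prime) (h6 : (p : ℤ) % 6 = 1)
    (p₁ : ℤ) (hp₁ : p₁ = ((p : ℤ) - 1) / 6)
    (n : ℤ) (hn : ¬ ((p : ℤ) ∣ (6 * n + 1))) :
    ∃! t : (ℤ × ℤ × ℤ) ⊕ (ℤ × ℤ × ℤ),
      Sum.elim
        (fun x : ℤ × ℤ × ℤ =>
          1 ≤ x.1 ∧ x.1 ≤ ((p : ℤ) - 1) / 2 ∧ 0 ≤ x.2.1 ∧ x.2.1 < 2 * (p : ℤ) ∧
            n = (p : ℤ) * (2 * (p : ℤ) * x.2.2 + x.2.1) + x.1 + p₁)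
        (fun x : ℤ × ℤ × ℤ =>
          1 ≤ x.1 ∧ x.1 ≤ ((p : ℤ) - 1) / 2 ∧ 1 ≤ x.2.1 ∧ x.2.1 ≤ 2 * (p : ℤ) ∧
            n = (p : ℤ) * (-(2 * (p : ℤ) * x.2.2) - x.2.1) - x.1 + p₁) t :=
  unique_param_mod6_one_general p h6 p₁ hp₁ n hn
end

section
/- Let p > 3 be prime and let 1 ≤ ℓ, ℓ' ≤ (p-1)/2 and 1 ≤ a, d ≤ p-1 with ad ≡ 1 (mod p) (more precisely, with ℓ' ≡ ±aℓ (mod p)). Then sin(6ℓπ/p) = (-1)^{ℓ' + aℓ + ⌊aℓ/p⌋} · sin(6ℓ'dπ/p). -/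
/-!
Since `a d ≡ 1`, the congruence `ℓ' ≡ ±aℓ` gives `ℓ' d ≡ ±ℓ (mod p)`, and `x ↦ sin (6xπ/p)` is odd
and `p`-periodic on `ℤ`, so the two sines agree up to that sign. Writing `aℓ = r + p ⌊aℓ/p⌋` with
`r = aℓ mod p`, the exponent is `ℓ' + r + (p + 1) ⌊aℓ/p⌋`; as `p` is odd, its parity is that of
`ℓ' + r`, which is `2ℓ'` when `r = ℓ'` and `p` when `r = p - ℓ'`.
-/

open Real

theorem Int.odd_of_prime_of_two_lt {p : ℤ} (hp : Prime p) (h2 : 2 < p) : Odd p := by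
  rw [← Int.natAbs_odd]
  exact (Int.prime_iff_natAbs_prime.mp hp).odd_of_ne_two (by omega)

theorem Int.even_add_add_ediv_of_modEq {p r n : ℤ} (hp : Odd p) (hr : 0 ≤ r) (hrp : r < p)
    (h : r ≡ n [ZMOD p]) : Even (r + n + n / p) := by
  obtain ⟨s, hs⟩ := hp
  have hn : n = r + p * (n / p) := by
    rw [← Int.emod_eq_of_lt hr hrp, h, Int.emod_add_mul_ediv]
  exact ⟨r + (s + 1) * (n / p), by linear_combination hn + (n / p) * hs⟩

theorem Int.odd_add_add_ediv_of_modEq_neg {p r n : ℤ} (hp : Odd p) (hr : 0 < r) (hrp : r < p)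
    (h : r ≡ -n [ZMOD p]) : Odd (r + n + n / p) := by
  have hpr : p - r ≡ n [ZMOD p] := by simpa using (Int.ModEq.refl p).sub h
  obtain ⟨t, ht⟩ := Int.even_add_add_ediv_of_modEq hp (by omega) (by omega) hpr
  obtain ⟨s, hs⟩ := hp
  exact ⟨t - s - 1 + r, by linear_combination ht - hs⟩

theorem Real.sin_mul_mul_pi_div_eq_of_modEq {k p x y : ℤ} (hk : Even k) (h : x ≡ y [ZMOD p]) :
    sin (k * x * π / p) = sin (k * y * π / p) := by
  obtain ⟨m, hm⟩ := h.dvd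
  obtain ⟨j, rfl⟩ := hk
  rcases eq_or_ne p 0 with rfl | hp
  · rw [show y = x by simpa [sub_eq_zero] using hm]
  have hpR : (p : ℝ) ≠ 0 := by exact_mod_cast hp
  have hyR : (y : ℝ) = x + p * m := by rw [← Int.cast_mul, ← hm]; push_cast; ring
  have harg : ((j + j : ℤ) : ℝ) * y * π / p = (j + j : ℤ) * x * π / p + (j * m : ℤ) * (2 * π) := by
    rw [hyR]; push_cast; field_simp; ring
  rw [harg, sin_add_int_mul_two_pi]

theorem sin_symmetry_general (p a d l l' : ℤ) (hp : Prime p) (hp3 : 3 < p)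
    (had : a * d ≡ 1 [ZMOD p])
    (hl2 : 1 ≤ l') (hl2' : l' ≤ (p - 1) / 2)
    (hll : l' ≡ a * l [ZMOD p] ∨ l' ≡ -(a * l) [ZMOD p]) :
    Real.sin (6 * l * π / p) =
      (-1 : ℝ) ^ (l' + a * l + (a * l) / p) * Real.sin (6 * l' * d * π / p) := by
  have hodd := Int.odd_of_prime_of_two_lt hp (by omega)
  have hl'p : l' < p := by omega
  have hsin {x y : ℤ} (h : x ≡ y [ZMOD p]) : sin (6 * x * π / p) = sin (6 * y * π / p) := by
    exact_mod_cast Real.sin_mul_mul_pi_div_eq_of_modEq (k := 6) (by decide) h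
  have hinv : a * l * d ≡ l [ZMOD p] := by
    rw [mul_right_comm]; simpa using had.mul_right l
  rw [mul_assoc (6 : ℝ) l' d, ← Int.cast_mul]
  rcases hll with h | h
  · rw [(Int.even_add_add_ediv_of_modEq hodd (by omega) hl'p h).neg_one_zpow, one_mul,
      hsin ((h.mul_right d).trans hinv)]
  · have hl'd : l' * d ≡ -l [ZMOD p] :=
      (h.mul_right d).trans (by rw [neg_mul]; exact hinv.neg)
    rw [(Int.odd_add_add_ediv_of_modEq_neg hodd (by omega) hl'p h).neg_one_zpow, hsin hl'd]
    simp only [Int.cast_neg, mul_neg, neg_mul, neg_div, sin_neg, one_mul, neg_neg]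

/-- Lemma: for `p > 3` prime, `1 ≤ a, d ≤ p-1` with `ad ≡ 1 (mod p)`, and
`1 ≤ ℓ, ℓ' ≤ (p-1)/2` with `ℓ' ≡ ±aℓ (mod p)`, one has
`sin(6ℓπ/p) = (-1)^{ℓ' + aℓ + ⌊aℓ/p⌋} sin(6ℓ'dπ/p)`. -/
theorem sin_symmetry (p a d l l' : ℤ) (hp : Prime p) (hp3 : 3 < p)
    (ha : 1 ≤ a) (ha' : a ≤ p - 1) (hd : 1 ≤ d) (hd' : d ≤ p - 1)
    (had : a * d ≡ 1 [ZMOD p])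
    (hl : 1 ≤ l) (hl' : l ≤ (p - 1) / 2)
    (hl2 : 1 ≤ l') (hl2' : l' ≤ (p - 1) / 2)
    (hll : l' ≡ a * l [ZMOD p] ∨ l' ≡ -(a * l) [ZMOD p]) :
    Real.sin (6 * l * π / p) =
      (-1 : ℝ) ^ (l' + a * l + (a * l) / p) * Real.sin (6 * l' * d * π / p) :=
  sin_symmetry_general p a d l l' hp hp3 had hl2 hl2' hll
end
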